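/- Let n ≥ 1 and λ ∈ (0, 2π/n]. If F ∈ D̄_n(λ) has at least one zero on the unit circle 𝕋, then F ∈ T̄_n(λ), i.e. all zeros of F lie on 𝕋 and every pair of zeros is separated by an angle of at least λ. -/

import Mathlib

open Polynomial Complex Finset
open scoped Classical

noncomputable section

/-- `uexp t = e^{it}`. -/
def uexp (t : ℝ) : ℂ := Complex.exp (Complex.I * t)

/-- Angular distance between two angles, measured on the circle `ℝ / 2πℤ`. -/
def angDist (x y : ℝ) : ℝ := ‖((x - y : ℝ) : AddCircle (2 * Real.pi))‖

/-- `polyOn n Ω` : polynomials of degree exactly `n` with all zeros in `Ω`. -/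
def polyOn (n : ℕ) (Ω : Set ℂ) : Set (Polynomial ℂ) :=
  {P | P.natDegree = n ∧ ∀ z : ℂ, P.IsRoot z → z ∈ Ω}

/-- `polyLe n Ω` : nonzero polynomials of degree at most `n` with all zeros in `Ω`. -/
def polyLe (n : ℕ) (Ω : Set ℂ) : Set (Polynomial ℂ) :=
  {P | P ≠ 0 ∧ P.natDegree ≤ n ∧ ∀ z : ℂ, P.IsRoot z → z ∈ Ω}

/-- Suffridge's class `T̄_n(λ)`. -/
def Tbar (n : ℕ) (lam : ℝ) : Set (Polynomial ℂ) :=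
  {P | ∃ (a : ℂ) (θ : Fin n → ℝ), a ≠ 0 ∧
    P = C a * ∏ j, (X - C (uexp (θ j))) ∧
    ∀ j k, j ≠ k → lam ≤ angDist (θ j) (θ k)}

/-- Suffridge's class `T_n(λ)`. -/
def Tstrict (n : ℕ) (lam : ℝ) : Set (Polynomial ℂ) :=
  {P | ∃ (a : ℂ) (θ : Fin n → ℝ), a ≠ 0 ∧
    P = C a * ∏ j, (X - C (uexp (θ j))) ∧
    ∀ j k, j ≠ k → lam < angDist (θ j) (θ k)}

/-- The quantity `e^{-inλ/2} F₊(z)/F₋(z)`. -/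
def dQuot (n : ℕ) (lam : ℝ) (F : Polynomial ℂ) (z : ℂ) : ℂ :=
  uexp (-(n * lam) / 2) * F.eval (uexp (lam / 2) * z) / F.eval (uexp (-(lam / 2)) * z)

/-- The class `D̄_n(λ)` for `λ ∈ [0, 2π/n]`. -/
def Dbar (n : ℕ) (lam : ℝ) : Set (Polynomial ℂ) :=
  if lam = 0 then polyOn n {z | ‖z‖ ≤ 1}
  else if lam = 2 * Real.pi / n then
    {P | ∃ a b : ℂ, a ≠ 0 ∧ ‖b‖ ≤ 1 ∧ P = C a * (X ^ n - C b)}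
  else {P | P.natDegree = n ∧ ∀ z : ℂ, 1 < ‖z‖ → 0 < (dQuot n lam P z).im}

/-- The class `D_n(λ)` for `λ ∈ [0, 2π/n)`. -/
def Dset (n : ℕ) (lam : ℝ) : Set (Polynomial ℂ) :=
  Tstrict n lam ∪
    (if lam = 0 then polyOn n {z | ‖z‖ < 1}
     else {P | P.natDegree = n ∧ ∀ z : ℂ, 1 ≤ ‖z‖ → 0 < (dQuot n lam P z).im})

/-- `Q_n(λ; z) = ∏_{j=1}^n (1 + e^{i(2j-n-1)λ/2} z)`. -/
def Qpoly (n : ℕ) (lam : ℝ) : Polynomial ℂ :=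
  ∏ j ∈ Finset.range n, (1 + C (uexp ((2 * (j : ℝ) + 1 - n) * lam / 2)) * X)

/-- The coefficients `C_k^{(n)}(λ)` of `Q_n(λ; ·)`. -/
def Ccoef (n k : ℕ) (lam : ℝ) : ℂ := (Qpoly n lam).coeff k

/-- The Suffridge convolution `F *_λ G` of two degree-`n` polynomials. -/
def lamConv (n : ℕ) (lam : ℝ) (F G : Polynomial ℂ) : Polynomial ℂ :=
  ∑ k ∈ Finset.range (n + 1), C (F.coeff k * G.coeff k / Ccoef n k lam) * X ^ k

/-- `preOf n lam f = f * Q_n(λ;·) = ∑ C_k^{(n)}(λ) a_k z^k`; so `f` belongs to the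
pre-coefficient class `P𝒞_n(λ)` iff `preOf n lam f ∈ 𝒞_n(λ)`. -/
def preOf (n : ℕ) (lam : ℝ) (f : Polynomial ℂ) : Polynomial ℂ :=
  ∑ k ∈ Finset.range (n + 1), C (Ccoef n k lam * f.coeff k) * X ^ k

/-- Pre-extremal polynomials `a ∑_{k=0}^n b^k z^k`, `a ≠ 0`, `|b| = 1`. -/
def PreExtremal (n : ℕ) (f : Polynomial ℂ) : Prop :=
  ∃ a b : ℂ, a ≠ 0 ∧ ‖b‖ = 1 ∧
    f = C a * ∑ k ∈ Finset.range (n + 1), C (b ^ k) * X ^ k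

/-- The `n`-inverse `F^{*n}(z) = z^n conj (F (1/ conj z))`. -/
def nInv (n : ℕ) (F : Polynomial ℂ) : Polynomial ℂ :=
  (F.reflect n).map (starRingEnd ℂ)

/-- `F₊(z) = F(e^{iλ/2} z)` as a polynomial. -/
def plusPoly (lam : ℝ) (F : Polynomial ℂ) : Polynomial ℂ :=
  F.comp (C (uexp (lam / 2)) * X)

/-- `F₋(z) = F(e^{-iλ/2} z)` as a polynomial. -/
def minusPoly (lam : ℝ) (F : Polynomial ℂ) : Polynomial ℂ :=
  F.comp (C (uexp (-(lam / 2))) * X)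

/-- The operator `Δ_λ^n[F](z) = (F₊(z) - F₋(z)) / (2 i z sin(nλ/2))`, with
`Δ_0^n[F] = F'/n`. -/
def Delta (n : ℕ) (lam : ℝ) (F : Polynomial ℂ) : Polynomial ℂ :=
  if lam = 0 then C ((n : ℂ)⁻¹) * derivative F
  else C ((2 * Complex.I * (Real.sin (n * lam / 2) : ℂ))⁻¹) *
    (plusPoly lam F - minusPoly lam F).divX

/-- `P` and `Q` (of degree `n`, zeros on the unit circle) have strictly interspersed
zeros: they are coprime and their zeros alternate on the unit circle. -/
def StrictIntersp (n : ℕ) (P Q : Polynomial ℂ) : Prop :=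
  IsCoprime P Q ∧ ∃ (a b : ℂ) (θ φ : ℕ → ℝ), a ≠ 0 ∧ b ≠ 0 ∧
    P = C a * ∏ j ∈ Finset.range n, (X - C (uexp (θ j))) ∧
    Q = C b * ∏ j ∈ Finset.range n, (X - C (uexp (φ j))) ∧
    (∀ j, j < n → θ j < φ j) ∧
    (∀ j, j + 1 < n → φ j < θ (j + 1)) ∧
    (0 < n → φ (n - 1) < θ 0 + 2 * Real.pi)

/-- The Grace–Szegő convolution of two polynomials of degree ≤ n. -/
def GSconv (n : ℕ) (F G : Polynomial ℂ) : Polynomial ℂ :=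
  ∑ k ∈ Finset.range (n + 1), C (F.coeff k * G.coeff k / (n.choose k : ℂ)) * X ^ k

/-- `Ω_{τ,γ}` : the image of the unit disk under `z ↦ τz/(1+γz)`. -/
def OmegaSet (τ : ℂ) (γ : ℝ) : Set ℂ :=
  (fun z => τ * z / (1 + (γ : ℂ) * z)) '' Metric.ball 0 1

/-- `I_γ = {z : |z| + γ|1+z| < 1}`. -/
def Iset (γ : ℝ) : Set ℂ := {z | ‖z‖ + γ * ‖1 + z‖ < 1}

/-- `O_γ = {z : |z| - γ|1+z| > 1}`. -/
def Oset (γ : ℝ) : Set ℂ := {z | 1 < ‖z‖ - γ * ‖1 + z‖}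

end

/-!
Write `F = c ∏ⱼ (z - wⱼ)`. At `z = e^{it}/s`, `0 < s < 1`, the quotient `e^{-inλ/2} F₊(z)/F₋(z)`
is a nonnegative multiple of `e^{iΣⱼ ψ(s wⱼ e^{-it})}`, where `ψ = factorArg λ` takes values in
`[0, π]` on the closed disk, in `(0, π)` on the open disk, and equals `π` at points of `𝕋` within
angle `λ/2` of `1`. The sum is `nλ/2 ∈ (0, π)` at `s = 0` and has positive sine for `0 < s < 1`, so
by continuity it stays in `(0, π)`; letting `s → 1` along a direction `t` for which no zero sits at
`e^{i(t ± λ/2)}` gives `Σⱼ ψ(wⱼ e^{-it}) ≤ π`. A zero on `𝕋` within `λ/2` of `e^{it}` contributes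
`π` to this sum, which leaves no room for a zero in the open disk or a second zero in that arc.
For `λ = 2π/n`, a zero on `𝕋` forces `F = a (zⁿ - b)` with `|b| = 1`, whose zeros are equally
spaced.
-/

open Real
open scoped ComplexOrder

lemma uexp_add (s t : ℝ) : uexp (s + t) = uexp s * uexp t := by
  simp only [uexp, ofReal_add, mul_add, Complex.exp_add]

lemma uexp_neg (t : ℝ) : uexp (-t) = (uexp t)⁻¹ := by
  simp only [uexp, ofReal_neg, mul_neg, Complex.exp_neg]

lemma uexp_sub (s t : ℝ) : uexp (s - t) = uexp s / uexp t := by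
  rw [sub_eq_add_neg, uexp_add, uexp_neg, div_eq_mul_inv]

lemma uexp_ne_zero (t : ℝ) : uexp t ≠ 0 := Complex.exp_ne_zero _

lemma uexp_mul_uexp_neg (t : ℝ) : uexp t * uexp (-t) = 1 := by
  rw [uexp_neg, mul_inv_cancel₀ (uexp_ne_zero t)]

lemma norm_uexp (t : ℝ) : ‖uexp t‖ = 1 := Complex.norm_exp_I_mul_ofReal t

lemma norm_mul_uexp (u : ℂ) (t : ℝ) : ‖u * uexp t‖ = ‖u‖ := by
  rw [norm_mul, norm_uexp, mul_one]

lemma uexp_re (t : ℝ) : (uexp t).re = Real.cos t := by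
  rw [uexp, mul_comm]; exact Complex.exp_ofReal_mul_I_re t

lemma uexp_im (t : ℝ) : (uexp t).im = Real.sin t := by
  rw [uexp, mul_comm]; exact Complex.exp_ofReal_mul_I_im t

lemma conj_uexp (t : ℝ) : (starRingEnd ℂ) (uexp t) = uexp (-t) := by
  rw [uexp, uexp, ← Complex.exp_conj]
  simp

lemma uexp_pow (t : ℝ) (n : ℕ) : uexp t ^ n = uexp (n * t) := by
  rw [uexp, uexp, ← Complex.exp_nat_mul]
  push_cast
  ring_nf

lemma uexp_sum {ι : Type*} (s : Finset ι) (f : ι → ℝ) :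
    uexp (∑ i ∈ s, f i) = ∏ i ∈ s, uexp (f i) := by
  simp only [uexp, ofReal_sum, Finset.mul_sum, Complex.exp_sum]

lemma norm_mul_uexp_arg (z : ℂ) : (‖z‖ : ℂ) * uexp (arg z) = z := by
  rw [uexp, mul_comm I]; exact Complex.norm_mul_exp_arg_mul_I z

lemma uexp_arg {z : ℂ} (hz : ‖z‖ = 1) : uexp (arg z) = z := by
  simpa [hz] using norm_mul_uexp_arg z

lemma eq_add_int_mul_two_pi_of_uexp_eq {s t : ℝ} (h : uexp s = uexp t) :
    ∃ k : ℤ, s = t + k * (2 * π) := by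
  obtain ⟨k, hk⟩ := Complex.exp_eq_exp_iff_exists_int.mp h
  refine ⟨k, ?_⟩
  have : ((s : ℂ) - (t + k * (2 * π) : ℝ)) * I = 0 := by push_cast; linear_combination hk
  exact_mod_cast (by simpa [sub_eq_zero] using this : (s : ℂ) = ((t + k * (2 * π) : ℝ) : ℂ))

lemma eq_uexp_neg_of_mul_uexp_eq_one {u : ℂ} {s : ℝ} (h : u * uexp s = 1) : u = uexp (-s) := by
  rw [← mul_one u, ← uexp_mul_uexp_neg s, ← mul_assoc, h, one_mul]

lemma re_uexp_mul_uexp_neg (a t : ℝ) : (uexp a * uexp (-t)).re = Real.cos (a - t) := by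
  rw [← uexp_add, uexp_re, sub_eq_add_neg]

lemma mem_Icc_zero_pi_of_sin_nonneg {x : ℝ} (h1 : -π < x) (h2 : x < 2 * π)
    (hs : 0 ≤ Real.sin x) : x ∈ Set.Icc 0 π := by
  refine ⟨not_lt.mp fun hx => (Real.sin_neg_of_neg_of_neg_pi_lt hx h1).not_ge hs,
    not_lt.mp fun hx => ?_⟩
  have := Real.sin_pos_of_pos_of_lt_pi (sub_pos.mpr hx) (by linarith : x - π < π)
  rw [Real.sin_sub_pi] at this
  linarith

lemma mem_Ioo_zero_pi_of_sin_pos {x : ℝ} (h1 : -π < x) (h2 : x < 2 * π)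
    (hs : 0 < Real.sin x) : x ∈ Set.Ioo 0 π := by
  obtain ⟨hx0, hxπ⟩ := mem_Icc_zero_pi_of_sin_nonneg h1 h2 hs.le
  refine ⟨hx0.lt_of_ne ?_, hxπ.lt_of_ne ?_⟩ <;> rintro rfl <;> simp at hs

lemma eq_pi_of_sin_eq_zero_of_cos_neg {x : ℝ} (hx : x ∈ Set.Icc 0 π) (hs : Real.sin x = 0)
    (hc : Real.cos x < 0) : x = π := by
  have hx0 : x ≠ 0 := by rintro rfl; norm_num at hc
  have h := (Real.sin_eq_zero_iff_of_lt_of_lt (x := π - x) (by linarith [hx.2, Real.pi_pos])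
    (by linarith [hx.1.lt_of_ne' hx0])).mp (by rwa [Real.sin_pi_sub])
  linarith

lemma mem_Ioo_zero_pi_of_continuousOn_of_sin_ne_zero {f : ℝ → ℝ} {a b : ℝ} (hab : a ≤ b)
    (hf : ContinuousOn f (Set.Icc a b)) (hsin : ∀ x ∈ Set.Icc a b, Real.sin (f x) ≠ 0)
    (ha : f a ∈ Set.Ioo 0 π) : f b ∈ Set.Ioo 0 π := by
  by_contra hb
  rcases le_or_gt (f b) 0 with hb0 | hb0
  · obtain ⟨x, hx, hfx⟩ := intermediate_value_Icc' hab hf ⟨hb0, ha.1.le⟩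
    exact hsin x hx (by rw [hfx, Real.sin_zero])
  · have hbπ : π ≤ f b := not_lt.mp fun h => hb ⟨hb0, h⟩
    obtain ⟨x, hx, hfx⟩ := intermediate_value_Icc hab hf ⟨ha.2.le, hbπ⟩
    exact hsin x hx (by rw [hfx, Real.sin_pi])

lemma re_one_sub_pos {x : ℂ} (hx : ‖x‖ ≤ 1) (h1 : x ≠ 1) : 0 < (1 - x).re := by
  rw [Complex.sub_re, Complex.one_re, sub_pos]
  refine (Complex.re_le_norm x |>.trans hx).lt_of_ne fun hre => h1 ?_
  have hnonneg : (0 : ℂ) ≤ x :=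
    Complex.re_eq_norm.mp (le_antisymm (Complex.re_le_norm x) (hre ▸ hx))
  exact Complex.ext hre (Complex.nonneg_iff.mp hnonneg).2.symm

lemma one_sub_mul_mem_slitPlane {u : ℂ} (hu : ‖u‖ ≤ 1) (hu1 : u ≠ 1) {s : ℝ}
    (hs : s ∈ Set.Icc (0 : ℝ) 1) : 1 - s * u ∈ slitPlane := by
  refine Complex.mem_slitPlane_iff.mpr (Or.inl (re_one_sub_pos ?_ ?_))
  · rw [norm_mul, Complex.norm_real, Real.norm_of_nonneg hs.1]
    exact mul_le_one₀ hs.2 (norm_nonneg u) hu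
  · rcases hs.2.lt_or_eq with hs1 | rfl
    · intro h
      have := congrArg norm h
      rw [norm_mul, Complex.norm_real, Real.norm_of_nonneg hs.1, norm_one] at this
      linarith [mul_le_mul_of_nonneg_left hu hs.1]
    · simpa using hu1

/-- A continuous choice of the argument of `e^{iλ/2} (1 - u e^{-iλ/2}) / (1 - u e^{iλ/2})`: this
is the factor that a zero `w` of `F` contributes to `dQuot n λ F z`, with `u = w / z`. -/
noncomputable def factorArg (lam : ℝ) (u : ℂ) : ℝ :=
  lam / 2 + arg (1 - u * uexp (-(lam / 2))) - arg (1 - u * uexp (lam / 2))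

lemma factorArg_zero (lam : ℝ) : factorArg lam 0 = lam / 2 := by
  simp [factorArg]

lemma uexp_mul_div_eq_ofReal_mul_uexp_factorArg (lam : ℝ) (u : ℂ) :
    uexp (lam / 2) * (1 - u * uexp (-(lam / 2))) / (1 - u * uexp (lam / 2)) =
      ((‖1 - u * uexp (-(lam / 2))‖ / ‖1 - u * uexp (lam / 2)‖ : ℝ) : ℂ) *
        uexp (factorArg lam u) := by
  set A := 1 - u * uexp (-(lam / 2))
  set B := 1 - u * uexp (lam / 2)
  conv_lhs => rw [← norm_mul_uexp_arg A, ← norm_mul_uexp_arg B]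
  rw [factorArg, uexp_sub, uexp_add]
  push_cast
  ring

lemma norm_mul_norm_mul_uexp_factorArg (lam : ℝ) (u : ℂ) :
    ((‖1 - u * uexp (-(lam / 2))‖ * ‖1 - u * uexp (lam / 2)‖ : ℝ) : ℂ) *
        uexp (factorArg lam u) =
      uexp (lam / 2) + ((‖u‖ ^ 2 : ℝ) : ℂ) * uexp (-(lam / 2)) - ((2 * u.re : ℝ) : ℂ) := by
  set A := 1 - u * uexp (-(lam / 2))
  set B := 1 - u * uexp (lam / 2)
  have hB : (‖B‖ : ℂ) * uexp (-arg B) = (starRingEnd ℂ) B := by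
    rw [← conj_uexp, ← Complex.conj_ofReal, ← map_mul, norm_mul_uexp_arg]
  calc _ = uexp (lam / 2) * ((‖A‖ : ℂ) * uexp (arg A)) * ((‖B‖ : ℂ) * uexp (-arg B)) := by
        rw [factorArg, sub_eq_add_neg, uexp_add, uexp_add]
        push_cast
        ring
    _ = uexp (lam / 2) * A * (starRingEnd ℂ) B := by rw [norm_mul_uexp_arg, hB]
    _ = _ := by
      have hre : u + (starRingEnd ℂ) u = 2 * u.re := by rw [Complex.add_conj]; push_cast; ring
      simp only [A, B, map_sub, map_one, map_mul, conj_uexp]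
      push_cast
      linear_combination (-(u + (starRingEnd ℂ) u) + uexp (-(lam / 2)) * u * (starRingEnd ℂ) u) *
          uexp_mul_uexp_neg (lam / 2) - hre + uexp (-(lam / 2)) * Complex.mul_conj' u

lemma norm_mul_norm_mul_sin_factorArg (lam : ℝ) (u : ℂ) :
    ‖1 - u * uexp (-(lam / 2))‖ * ‖1 - u * uexp (lam / 2)‖ * Real.sin (factorArg lam u) =
      (1 - ‖u‖ ^ 2) * Real.sin (lam / 2) := by
  have h := congrArg Complex.im (norm_mul_norm_mul_uexp_factorArg lam u)
  simp only [Complex.sub_im, Complex.add_im, Complex.im_ofReal_mul, Complex.ofReal_im, uexp_im,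
    Real.sin_neg] at h
  linear_combination h

lemma norm_mul_norm_mul_cos_factorArg (lam : ℝ) (u : ℂ) :
    ‖1 - u * uexp (-(lam / 2))‖ * ‖1 - u * uexp (lam / 2)‖ * Real.cos (factorArg lam u) =
      (1 + ‖u‖ ^ 2) * Real.cos (lam / 2) - 2 * u.re := by
  have h := congrArg Complex.re (norm_mul_norm_mul_uexp_factorArg lam u)
  simp only [Complex.sub_re, Complex.add_re, Complex.re_ofReal_mul, Complex.ofReal_re, uexp_re,
    Real.cos_neg] at h
  linear_combination h

section factorArg

variable {lam : ℝ} {u : ℂ}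

lemma norm_one_sub_mul_norm_one_sub_pos (hA : u * uexp (-(lam / 2)) ≠ 1)
    (hB : u * uexp (lam / 2) ≠ 1) :
    0 < ‖1 - u * uexp (-(lam / 2))‖ * ‖1 - u * uexp (lam / 2)‖ :=
  mul_pos (norm_pos_iff.mpr (sub_ne_zero.mpr hA.symm)) (norm_pos_iff.mpr (sub_ne_zero.mpr hB.symm))

lemma factorArg_mem_Ioo_of_norm_le (hu : ‖u‖ ≤ 1) (hA : u * uexp (-(lam / 2)) ≠ 1)
    (hB : u * uexp (lam / 2) ≠ 1) : factorArg lam u ∈ Set.Ioo (lam / 2 - π) (lam / 2 + π) := by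
  have harg : ∀ s : ℝ, u * uexp s ≠ 1 → |arg (1 - u * uexp s)| < π / 2 := fun s hs =>
    Complex.abs_arg_lt_pi_div_two_iff.mpr
      (Or.inl (re_one_sub_pos (by rwa [norm_mul_uexp]) hs))
  have hA' := abs_lt.mp (harg _ hA)
  have hB' := abs_lt.mp (harg _ hB)
  constructor <;> · rw [factorArg]; linarith

lemma factorArg_mem_Icc (h0 : 0 < lam) (h2π : lam < 2 * π) (hu : ‖u‖ ≤ 1)
    (hA : u * uexp (-(lam / 2)) ≠ 1) (hB : u * uexp (lam / 2) ≠ 1) :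
    factorArg lam u ∈ Set.Icc 0 π := by
  obtain ⟨h1, h2⟩ := factorArg_mem_Ioo_of_norm_le hu hA hB
  have hAB := norm_one_sub_mul_norm_one_sub_pos hA hB
  have hsin := norm_mul_norm_mul_sin_factorArg lam u
  have hsin_half := Real.sin_pos_of_pos_of_lt_pi (half_pos h0) (by linarith)
  have hu2 : ‖u‖ ^ 2 ≤ 1 := pow_le_one₀ (norm_nonneg u) hu
  refine mem_Icc_zero_pi_of_sin_nonneg (by linarith) (by linarith) ?_
  exact nonneg_of_mul_nonneg_right (hsin ▸ mul_nonneg (by linarith) hsin_half.le) hAB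

lemma factorArg_mem_Ioo (h0 : 0 < lam) (h2π : lam < 2 * π) (hu : ‖u‖ < 1) :
    factorArg lam u ∈ Set.Ioo 0 π := by
  have hne : ∀ s : ℝ, u * uexp s ≠ 1 := fun s h => by
    have := congrArg norm h
    rw [norm_mul_uexp, norm_one] at this
    exact hu.ne this
  obtain ⟨h1, h2⟩ := factorArg_mem_Ioo_of_norm_le hu.le (hne (-(lam / 2))) (hne (lam / 2))
  have hAB := norm_one_sub_mul_norm_one_sub_pos (hne (-(lam / 2))) (hne (lam / 2))
  have hsin := norm_mul_norm_mul_sin_factorArg lam u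
  have hsin_half := Real.sin_pos_of_pos_of_lt_pi (half_pos h0) (by linarith)
  have hu2 : ‖u‖ ^ 2 < 1 := pow_lt_one₀ (norm_nonneg u) hu two_ne_zero
  refine mem_Ioo_zero_pi_of_sin_pos (by linarith) (by linarith) ?_
  exact pos_of_mul_pos_right (hsin ▸ mul_pos (by linarith) hsin_half) hAB.le

lemma factorArg_eq_pi (h0 : 0 < lam) (h2π : lam < 2 * π) (hu : ‖u‖ = 1)
    (hre : Real.cos (lam / 2) < u.re) : factorArg lam u = π := by
  have hne : ∀ s : ℝ, Real.cos s = Real.cos (lam / 2) → u * uexp s ≠ 1 := fun s hs h => by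
    rw [eq_uexp_neg_of_mul_uexp_eq_one h, uexp_re, Real.cos_neg, hs] at hre
    exact lt_irrefl _ hre
  have hA := hne (-(lam / 2)) (Real.cos_neg _)
  have hB := hne (lam / 2) rfl
  have hAB := norm_one_sub_mul_norm_one_sub_pos hA hB
  have hsin := norm_mul_norm_mul_sin_factorArg lam u
  have hcos := norm_mul_norm_mul_cos_factorArg lam u
  rw [hu] at hsin hcos
  refine eq_pi_of_sin_eq_zero_of_cos_neg (factorArg_mem_Icc h0 h2π hu.le hA hB) ?_ ?_
  · simpa [hAB.ne'] using hsin
  · exact neg_of_mul_neg_right (by linarith) hAB.le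

lemma continuousOn_factorArg_mul (hu : ‖u‖ ≤ 1) (hA : u * uexp (-(lam / 2)) ≠ 1)
    (hB : u * uexp (lam / 2) ≠ 1) :
    ContinuousOn (fun s : ℝ => factorArg lam (s * u)) (Set.Icc 0 1) := by
  have hnorm : ∀ x : ℝ, ‖u * uexp x‖ ≤ 1 := fun x => by rwa [norm_mul_uexp]
  intro s hs
  refine ContinuousAt.continuousWithinAt ?_
  have harg : ∀ x : ℝ, u * uexp x ≠ 1 →
      ContinuousAt (fun s : ℝ => arg (1 - s * u * uexp x)) s := fun x hx => by
    simp_rw [mul_assoc]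
    exact (Complex.continuousAt_arg (one_sub_mul_mem_slitPlane (hnorm x) hx hs)).comp
      (f := fun s : ℝ => 1 - (s : ℂ) * (u * uexp x)) (by fun_prop)
  exact (continuousAt_const.add (harg _ hA)).sub (harg _ hB)

end factorArg

lemma sum_factorArg_le_pi {n : ℕ} {lam : ℝ} (h0 : 0 < n * lam) (hlt : n * lam < 2 * π)
    {u : Fin n → ℂ} (hu : ∀ j, ‖u j‖ ≤ 1) (hA : ∀ j, u j * uexp (-(lam / 2)) ≠ 1)
    (hB : ∀ j, u j * uexp (lam / 2) ≠ 1)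
    (hsin : ∀ s ∈ Set.Ioo (0 : ℝ) 1, 0 < Real.sin (∑ j, factorArg lam (s * u j))) :
    ∑ j, factorArg lam (u j) ≤ π := by
  set f : ℝ → ℝ := fun s => ∑ j, factorArg lam (s * u j)
  have hf : ContinuousOn f (Set.Icc 0 1) :=
    continuousOn_finsetSum _ fun j _ => continuousOn_factorArg_mul (hu j) (hA j) (hB j)
  have hf0 : f 0 = n * lam / 2 := by simp [f, factorArg_zero, mul_div_assoc]
  have hf0_mem : f 0 ∈ Set.Ioo 0 π := by rw [hf0]; constructor <;> linarith
  have hsin' : ∀ s ∈ Set.Ico (0 : ℝ) 1, Real.sin (f s) ≠ 0 := by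
    rintro s ⟨hs0, hs1⟩
    rcases hs0.eq_or_lt with rfl | hs0
    · exact (Real.sin_pos_of_pos_of_lt_pi hf0_mem.1 hf0_mem.2).ne'
    · exact (hsin s ⟨hs0, hs1⟩).ne'
  have hmem : f '' Set.Ico 0 1 ⊆ Set.Ioo 0 π := by
    rintro _ ⟨s, hs, rfl⟩
    exact mem_Ioo_zero_pi_of_continuousOn_of_sin_ne_zero hs.1
      (hf.mono (Set.Icc_subset_Icc le_rfl hs.2.le))
      (fun x hx => hsin' x ⟨hx.1, hx.2.trans_lt hs.2⟩) hf0_mem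
  have hf1 : f 1 ∈ closure (f '' Set.Ico 0 1) :=
    ((hf 1 ⟨zero_le_one, le_rfl⟩).mono Set.Ico_subset_Icc_self).mem_closure_image
      (by rw [closure_Ico zero_ne_one]; exact Set.right_mem_Icc.mpr zero_le_one)
  have := closure_mono hmem hf1
  rw [closure_Ioo Real.pi_pos.ne] at this
  simpa [f] using this.2

lemma countable_setOf_mul_uexp_neg_mul_uexp_eq_one (w : ℂ) (s : ℝ) :
    {t : ℝ | w * uexp (-t) * uexp s = 1}.Countable := by
  refine (Set.countable_range fun k : ℤ => arg w + s + k * (2 * π)).mono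
    fun t (ht : w * uexp (-t) * uexp s = 1) => ?_
  rw [mul_assoc, ← uexp_add] at ht
  have hw : w = uexp (t - s) := by rw [eq_uexp_neg_of_mul_uexp_eq_one ht]; ring_nf
  have hnorm : ‖w‖ = 1 := by rw [hw, norm_uexp]
  obtain ⟨k, hk⟩ := eq_add_int_mul_two_pi_of_uexp_eq (hw.symm.trans (uexp_arg hnorm).symm)
  exact ⟨k, by linarith⟩

/-- No `w j` is an endpoint `e^{i(t ± λ/2)}` of the arc of half-width `λ/2` around `e^{it}`. -/
def AvoidsArcEnds {n : ℕ} (lam t : ℝ) (w : Fin n → ℂ) : Prop :=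
  ∀ j, w j * uexp (-t) * uexp (-(lam / 2)) ≠ 1 ∧ w j * uexp (-t) * uexp (lam / 2) ≠ 1

lemma exists_mem_avoidsArcEnds {n : ℕ} {U : Set ℝ} (hU : IsOpen U) (hne : U.Nonempty)
    (lam : ℝ) (w : Fin n → ℂ) : ∃ t ∈ U, AvoidsArcEnds lam t w := by
  have hbad : (⋃ j, {t : ℝ | w j * uexp (-t) * uexp (-(lam / 2)) = 1} ∪
      {t : ℝ | w j * uexp (-t) * uexp (lam / 2) = 1}).Countable :=
    Set.countable_iUnion fun j => (countable_setOf_mul_uexp_neg_mul_uexp_eq_one _ _).union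
      (countable_setOf_mul_uexp_neg_mul_uexp_eq_one _ _)
  obtain ⟨t, htU, ht⟩ := (hbad.dense_compl ℝ).inter_open_nonempty U hU hne
  simp only [Set.mem_compl_iff, Set.mem_iUnion, Set.mem_union, Set.mem_ofPred_eq, not_exists,
    not_or] at ht
  exact ⟨t, htU, ht⟩

lemma exists_cos_lt_re_of_angDist_lt {a b lam : ℝ} (hlam : lam ≤ 2 * π)
    (h : angDist a b < lam) :
    ∃ t, Real.cos (lam / 2) < (uexp a * uexp (-t)).re ∧
      Real.cos (lam / 2) < (uexp b * uexp (-t)).re := by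
  set K := round ((2 * π)⁻¹ * (a - b))
  set r := a - b - K * (2 * π)
  have hr : |r / 2| < lam / 2 := by
    rw [abs_div, abs_two]
    have := AddCircle.norm_eq (2 * π) (x := a - b)
    rw [angDist, this] at h
    linarith
  have hcos : Real.cos (lam / 2) < Real.cos (r / 2) := by
    rw [← Real.cos_abs (r / 2)]
    exact Real.cos_lt_cos_of_nonneg_of_le_pi (abs_nonneg _) (by linarith) hr
  refine ⟨a - r / 2, ?_, ?_⟩ <;> rw [re_uexp_mul_uexp_neg]
  · rwa [sub_sub_cancel]
  · rwa [show b - (a - r / 2) = -(r / 2) + (-K : ℤ) * (2 * π) by push_cast [r]; ring,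
      Real.cos_add_int_mul_two_pi, Real.cos_neg]

section dQuot

variable {n : ℕ} {lam : ℝ} {c : ℂ} {w : Fin n → ℂ}

lemma dQuot_C_mul_prod_X_sub_C (hc : c ≠ 0) (z : ℂ) :
    dQuot n lam (C c * ∏ j, (X - C (w j))) z =
      ∏ j, uexp (-(lam / 2)) * (uexp (lam / 2) * z - w j) / (uexp (-(lam / 2)) * z - w j) := by
  simp only [dQuot, eval_mul, eval_C, eval_prod, eval_sub, eval_X]
  rw [Finset.prod_div_distrib, Finset.prod_mul_distrib, Finset.prod_const, Finset.card_univ,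
    Fintype.card_fin, uexp_pow, mul_left_comm, mul_div_mul_left _ _ hc]
  ring_nf

lemma uexp_mul_sub_div_uexp_mul_sub (lam : ℝ) (w : ℂ) {z : ℂ} (hz : z ≠ 0) :
    uexp (-(lam / 2)) * (uexp (lam / 2) * z - w) / (uexp (-(lam / 2)) * z - w) =
      uexp (lam / 2) * (1 - w / z * uexp (-(lam / 2))) / (1 - w / z * uexp (lam / 2)) := by
  have h1 := uexp_mul_uexp_neg (lam / 2)
  have hplus : uexp (lam / 2) * z - w = uexp (lam / 2) * z * (1 - w / z * uexp (-(lam / 2))) := by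
    field_simp
    linear_combination w * h1
  have hminus : uexp (-(lam / 2)) * z - w =
      uexp (-(lam / 2)) * z * (1 - w / z * uexp (lam / 2)) := by
    field_simp
    linear_combination w * h1
  calc _ = uexp (-(lam / 2)) * z * (uexp (lam / 2) * (1 - w / z * uexp (-(lam / 2)))) /
        (uexp (-(lam / 2)) * z * (1 - w / z * uexp (lam / 2))) := by rw [hplus, hminus]; ring
    _ = _ := mul_div_mul_left _ _ (mul_ne_zero (uexp_ne_zero _) hz)

lemma exists_dQuot_eq_ofReal_mul_uexp (hc : c ≠ 0) {z : ℂ} (hz : z ≠ 0) :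
    ∃ r : ℝ, 0 ≤ r ∧
      dQuot n lam (C c * ∏ j, (X - C (w j))) z = r * uexp (∑ j, factorArg lam (w j / z)) := by
  refine ⟨∏ j, ‖1 - w j / z * uexp (-(lam / 2))‖ / ‖1 - w j / z * uexp (lam / 2)‖,
    by positivity, ?_⟩
  simp only [dQuot_C_mul_prod_X_sub_C hc, uexp_mul_sub_div_uexp_mul_sub lam _ hz,
    uexp_mul_div_eq_ofReal_mul_uexp_factorArg, Finset.prod_mul_distrib, ofReal_prod, uexp_sum]

lemma sin_sum_factorArg_pos (hc : c ≠ 0)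
    (him : ∀ z : ℂ, 1 < ‖z‖ → 0 < (dQuot n lam (C c * ∏ j, (X - C (w j))) z).im)
    {z : ℂ} (hz : 1 < ‖z‖) : 0 < Real.sin (∑ j, factorArg lam (w j / z)) := by
  obtain ⟨r, hr, hq⟩ := exists_dQuot_eq_ofReal_mul_uexp (lam := lam) (w := w) hc
    (norm_pos_iff.mp (one_pos.trans hz))
  have h := him z hz
  rw [hq, Complex.im_ofReal_mul, uexp_im] at h
  exact pos_of_mul_pos_right h hr

lemma norm_le_one_of_im_dQuot_pos
    (him : ∀ z : ℂ, 1 < ‖z‖ → 0 < (dQuot n lam (C c * ∏ j, (X - C (w j))) z).im)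
    (j : Fin n) : ‖w j‖ ≤ 1 := by
  by_contra! hj
  -- `F₋` vanishes at `e^{iλ/2} w j`, where `dQuot` is therefore `x / 0 = 0`.
  have h := him (uexp (lam / 2) * w j) (by rwa [norm_mul, norm_uexp, one_mul])
  have hw : uexp (-(lam / 2)) * (uexp (lam / 2) * w j) = w j := by
    rw [← mul_assoc, mul_comm (uexp _), uexp_mul_uexp_neg, one_mul]
  have hroot : (C c * ∏ k, (X - C (w k))).eval (w j) = 0 := by
    simp only [eval_mul, eval_prod, eval_sub, eval_X, eval_C]
    exact mul_eq_zero_of_right _ (Finset.prod_eq_zero (Finset.mem_univ j) (sub_self _))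
  rw [dQuot, hw, hroot, div_zero, Complex.zero_im] at h
  exact lt_irrefl _ h

lemma sum_factorArg_mul_uexp_neg_le_pi (h0 : 0 < n * lam) (hlt : n * lam < 2 * π) (hc : c ≠ 0)
    (him : ∀ z : ℂ, 1 < ‖z‖ → 0 < (dQuot n lam (C c * ∏ j, (X - C (w j))) z).im) {t : ℝ}
    (ht : AvoidsArcEnds lam t w) : ∑ j, factorArg lam (w j * uexp (-t)) ≤ π := by
  refine sum_factorArg_le_pi h0 hlt
    (fun j => (norm_mul_uexp _ _).trans_le (norm_le_one_of_im_dQuot_pos him j))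
    (fun j => (ht j).1) (fun j => (ht j).2) fun s hs => ?_
  have hz : 1 < ‖uexp t / s‖ := by
    rw [norm_div, norm_uexp, Complex.norm_real, Real.norm_of_nonneg hs.1.le]
    exact one_lt_one_div hs.1 hs.2
  convert sin_sum_factorArg_pos hc him hz using 4 with j
  rw [uexp_neg]
  field_simp [uexp_ne_zero t, Complex.ofReal_ne_zero.mpr hs.1.ne']

lemma factorArg_nonpos_of_factorArg_eq_pi (h0 : 0 < lam) (hlt : n * lam < 2 * π) (hc : c ≠ 0)
    (him : ∀ z : ℂ, 1 < ‖z‖ → 0 < (dQuot n lam (C c * ∏ j, (X - C (w j))) z).im) {t : ℝ}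
    (ht : AvoidsArcEnds lam t w) {j k : Fin n} (hjk : j ≠ k)
    (hj : factorArg lam (w j * uexp (-t)) = π) : factorArg lam (w k * uexp (-t)) ≤ 0 := by
  have hn : (1 : ℝ) ≤ n := Nat.one_le_cast.mpr j.pos
  have h2π : lam < 2 * π := by nlinarith
  have hnonneg : ∀ i ∈ Finset.univ, 0 ≤ factorArg lam (w i * uexp (-t)) := fun i _ => by
    have hi := (norm_mul_uexp (w i) (-t)).trans_le (norm_le_one_of_im_dQuot_pos him i)
    exact (factorArg_mem_Icc h0 h2π hi (ht i).1 (ht i).2).1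
  have hsum := Finset.add_le_sum hnonneg (Finset.mem_univ j) (Finset.mem_univ k) hjk
  have hle := sum_factorArg_mul_uexp_neg_le_pi (by nlinarith) hlt hc him ht
  linarith

lemma norm_eq_one_of_im_dQuot_pos (h0 : 0 < lam) (hlt : n * lam < 2 * π) (hc : c ≠ 0)
    (him : ∀ z : ℂ, 1 < ‖z‖ → 0 < (dQuot n lam (C c * ∏ j, (X - C (w j))) z).im)
    {j₀ : Fin n} (hj₀ : ‖w j₀‖ = 1) (k : Fin n) : ‖w k‖ = 1 := by
  have h2π : lam < 2 * π := by nlinarith [(Nat.one_le_cast.mpr j₀.pos : (1 : ℝ) ≤ n)]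
  by_contra hk
  have hk' : ‖w k‖ < 1 := (norm_le_one_of_im_dQuot_pos him k).lt_of_ne hk
  have hcos : Real.cos (lam / 2) < Real.cos (arg (w j₀) - arg (w j₀)) := by
    rw [sub_self]
    exact Real.cos_lt_cos_of_nonneg_of_le_pi le_rfl (by linarith) (half_pos h0)
  rw [← re_uexp_mul_uexp_neg, uexp_arg hj₀] at hcos
  obtain ⟨t, ht, hgood⟩ := exists_mem_avoidsArcEnds
    (U := {t | Real.cos (lam / 2) < (w j₀ * uexp (-t)).re})
    (isOpen_lt continuous_const (by unfold uexp; fun_prop)) ⟨_, hcos⟩ lam w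
  have hpos := (factorArg_mem_Ioo (u := w k * uexp (-t)) h0 h2π
    (by rwa [norm_mul_uexp])).1
  exact hpos.not_ge (factorArg_nonpos_of_factorArg_eq_pi h0 hlt hc him hgood
    (fun h => hk (h ▸ hj₀)) (factorArg_eq_pi h0 h2π (hre := ht)
      (by rw [norm_mul_uexp, hj₀])))

theorem C_mul_prod_X_sub_C_mem_Tbar (h0 : 0 < lam) (hlt : n * lam < 2 * π) (hc : c ≠ 0)
    (him : ∀ z : ℂ, 1 < ‖z‖ → 0 < (dQuot n lam (C c * ∏ j, (X - C (w j))) z).im)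
    (hroot : ∃ j, ‖w j‖ = 1) : C c * ∏ j, (X - C (w j)) ∈ Tbar n lam := by
  obtain ⟨j₀, hj₀⟩ := hroot
  have h2π : lam < 2 * π := by nlinarith [(Nat.one_le_cast.mpr j₀.pos : (1 : ℝ) ≤ n)]
  have hcircle := norm_eq_one_of_im_dQuot_pos h0 hlt hc him hj₀
  have hnorm : ∀ j t, ‖w j * uexp (-t)‖ = 1 := fun j t => by rw [norm_mul_uexp, hcircle]
  refine ⟨c, fun j => arg (w j), hc, by simp_rw [uexp_arg (hcircle _)], fun j k hjk => ?_⟩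
  by_contra! hclose
  obtain ⟨t₀, ht₀⟩ := exists_cos_lt_re_of_angDist_lt h2π.le hclose
  rw [uexp_arg (hcircle j), uexp_arg (hcircle k)] at ht₀
  obtain ⟨t, ⟨htj, htk⟩, hgood⟩ := exists_mem_avoidsArcEnds
    (U := {t | Real.cos (lam / 2) < (w j * uexp (-t)).re} ∩
      {t | Real.cos (lam / 2) < (w k * uexp (-t)).re})
    ((isOpen_lt continuous_const (by unfold uexp; fun_prop)).inter
      (isOpen_lt continuous_const (by unfold uexp; fun_prop))) ⟨t₀, ht₀⟩ lam w
  have h := factorArg_nonpos_of_factorArg_eq_pi h0 hlt hc him hgood hjk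
    (factorArg_eq_pi h0 h2π (hre := htj) (hnorm j t))
  rw [factorArg_eq_pi h0 h2π (hre := htk) (hnorm k t)] at h
  exact Real.pi_pos.not_ge h

end dQuot

lemma two_pi_div_le_norm_coe_intCast_mul {n : ℕ} (hn : 0 < n) {m : ℤ} (hm : ¬(n : ℤ) ∣ m) :
    2 * π / n ≤ ‖((m * (2 * π / n) : ℝ) : AddCircle (2 * π))‖ := by
  have hπn : 0 < 2 * π / n := by positivity
  rw [AddCircle.norm_eq]
  set K := round ((2 * π)⁻¹ * (m * (2 * π / n)))
  have hne : m - K * n ≠ 0 := fun h => hm ⟨K, by linear_combination h⟩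
  have h1 : (1 : ℝ) ≤ |((m - K * n : ℤ) : ℝ)| := by exact_mod_cast Int.one_le_abs hne
  have he : (m : ℝ) * (2 * π / n) - K * (2 * π) = ((m - K * n : ℤ) : ℝ) * (2 * π / n) := by
    push_cast
    field_simp
  rw [he, abs_mul, abs_of_pos hπn]
  nlinarith

lemma C_mul_X_pow_sub_C_mem_Tbar {n : ℕ} (hn : n ≠ 0) {a b z₀ : ℂ} (ha : a ≠ 0)
    (hz₀ : ‖z₀‖ = 1) (hroot : (C a * (X ^ n - C b)).IsRoot z₀) :
    C a * (X ^ n - C b) ∈ Tbar n (2 * π / n) := by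
  have hb : z₀ ^ n = b := by
    simpa [ha, sub_eq_zero] using hroot
  have hζ : IsPrimitiveRoot (uexp (2 * π / n)) n := by
    convert Complex.isPrimitiveRoot_exp n hn using 1
    rw [uexp]
    push_cast
    ring_nf
  refine ⟨a, fun j => arg z₀ + (j : ℕ) * (2 * π / n), ha, ?_, fun j k hjk => ?_⟩
  · rw [X_pow_sub_C_eq_prod hζ (Nat.pos_of_ne_zero hn) hb,
      ← Fin.prod_univ_eq_prod_range (fun i => X - C (uexp (2 * π / n) ^ i * z₀))]
    simp_rw [uexp_add, uexp_arg hz₀, uexp_pow, mul_comm z₀]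
  · rw [angDist, show arg z₀ + (j : ℕ) * (2 * π / n) - (arg z₀ + (k : ℕ) * (2 * π / n)) =
      (((j : ℕ) - (k : ℕ) : ℤ) : ℝ) * (2 * π / n) by push_cast; ring]
    refine two_pi_div_le_norm_coe_intCast_mul (Nat.pos_of_ne_zero hn) fun hdvd => hjk ?_
    have := Int.eq_zero_of_dvd_of_natAbs_lt_natAbs hdvd (by omega)
    omega

lemma exists_eq_C_leadingCoeff_mul_prod_X_sub_C {F : ℂ[X]} {n : ℕ} (hF : F.natDegree = n) :
    ∃ w : Fin n → ℂ, F = C F.leadingCoeff * ∏ j, (X - C (w j)) := by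
  set l := F.roots.toList
  have hl : l.length = n := by
    rw [Multiset.length_toList, IsAlgClosed.card_roots_eq_natDegree, hF]
  refine ⟨fun j => l[Fin.cast hl.symm j], ?_⟩
  conv_lhs => rw [(IsAlgClosed.splits F).eq_prod_roots, ← Multiset.coe_toList F.roots,
    Multiset.map_coe, Multiset.prod_coe, ← List.ofFn_getElem_eq_map, List.prod_ofFn]
  rw [← Fin.prod_congr' _ hl]
  rfl

theorem stmt3_general (n : ℕ) (lam : ℝ) (h0 : 0 < lam) (h1 : lam ≤ 2 * Real.pi / n)
    (F : Polynomial ℂ) (hF : F ∈ Dbar n lam)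
    (hroot : ∃ z : ℂ, ‖z‖ = 1 ∧ F.IsRoot z) :
    F ∈ Tbar n lam := by
  have hn : n ≠ 0 := by
    rintro rfl
    simp only [CharP.cast_eq_zero, div_zero] at h1
    linarith
  obtain ⟨z₀, hz₀, hz₀root⟩ := hroot
  rw [Dbar, if_neg h0.ne'] at hF
  split_ifs at hF with hlam
  · obtain ⟨a, b, ha, -, rfl⟩ := hF
    exact hlam ▸ C_mul_X_pow_sub_C_mem_Tbar hn ha hz₀ hz₀root
  · obtain ⟨hdeg, him⟩ := hF
    have hlt : n * lam < 2 * π := by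
      rw [← lt_div_iff₀' (by positivity)]
      exact h1.lt_of_ne hlam
    have hc : F.leadingCoeff ≠ 0 := leadingCoeff_ne_zero.mpr (by rintro rfl; simp_all)
    obtain ⟨w, hw⟩ := exists_eq_C_leadingCoeff_mul_prod_X_sub_C hdeg
    rw [hw] at him hz₀root ⊢
    refine C_mul_prod_X_sub_C_mem_Tbar h0 hlt hc him ?_
    obtain ⟨j, hj⟩ : ∃ j, z₀ = w j := by
      simpa [eval_prod, Finset.prod_eq_zero_iff, sub_eq_zero, hc] using hz₀root
    exact ⟨j, hj ▸ hz₀⟩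

theorem stmt3 (n : ℕ) (hn : 1 ≤ n) (lam : ℝ) (h0 : 0 < lam) (h1 : lam ≤ 2 * Real.pi / n)
    (F : Polynomial ℂ) (hF : F ∈ Dbar n lam)
    (hroot : ∃ z : ℂ, ‖z‖ = 1 ∧ F.IsRoot z) :
    F ∈ Tbar n lam :=
  stmt3_general n lam h0 h1 F hF hroot
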